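/- The Popescu–Rohrlich box, i.e., the CHSH box given by p_{ij}(a,b) = 1/2 if a + b = i·j and p_{ij}(a,b) = 0 otherwise (for i, j, a, b ∈ ZMod 2), is contextual: there is no λ : (ZMod 2)^4 → ℝ with λ ≥ 0, total sum 1, and p_{ij}(a,b) = ∑_{(a₀,a₁,b₀,b₁) with a_i = a and b_j = b} λ(a₀,a₁,b₀,b₁) for all i, j, a, b. Moreover it is strongly contextual: there is no global assignment (a₀,a₁,b₀,b₁) ∈ (ZMod 2)^4 with p_{ij}(a_i, b_j) > 0 for all i, j. -/

import Mathlib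

open Finset

/-- The Popescu–Rohrlich box: `p i j a b = 1/2` if `a + b = i·j`, and `0` otherwise. -/
noncomputable def PRBox (i j a b : ZMod 2) : ℝ :=
  if a + b = i * j then 1 / 2 else 0

/-- A CHSH box is noncontextual when it is the family of marginals of a probability
distribution on global outcome assignments `(α, β)`, `α i` being the outcome of `xᵢ`
and `β j` the outcome of `yⱼ`. -/
def IsNoncontextualBox (p : ZMod 2 → ZMod 2 → ZMod 2 → ZMod 2 → ℝ) : Prop :=
  ∃ lam : (ZMod 2 → ZMod 2) → (ZMod 2 → ZMod 2) → ℝ,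
    (∀ α β, 0 ≤ lam α β) ∧
    (∑ α : ZMod 2 → ZMod 2, ∑ β : ZMod 2 → ZMod 2, lam α β = 1) ∧
    (∀ i j a b, p i j a b =
      ∑ α ∈ univ.filter (fun α : ZMod 2 → ZMod 2 => α i = a),
        ∑ β ∈ univ.filter (fun β : ZMod 2 → ZMod 2 => β j = b), lam α β)

/-! Any global assignment in the support of a hidden-variable model is possible in every
context, so a noncontextual box is never strongly contextual. The PR box is strongly
contextual because `α i + β j = i * j` for all four contexts is inconsistent: summing the four
equations, each of `α 0, α 1, β 0, β 1` appears twice on the left, while the right-hand side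
sums to `1`. -/

theorem PRBox_pos_iff (i j a b : ZMod 2) : 0 < PRBox i j a b ↔ a + b = i * j := by
  unfold PRBox
  split_ifs with h <;> simp [h]

theorem not_forall_add_eq_mul (α β : ZMod 2 → ZMod 2) : ¬ ∀ i j, α i + β j = i * j := by
  intro h
  have : (1 : ZMod 2) = 0 :=
    calc (1 : ZMod 2) = 0 * 0 + 0 * 1 + 1 * 0 + 1 * 1 := by decide
      _ = (α 0 + β 0) + (α 0 + β 1) + (α 1 + β 0) + (α 1 + β 1) := by
        rw [h 0 0, h 0 1, h 1 0, h 1 1]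
      _ = 2 * (α 0 + α 1 + β 0 + β 1) := by ring
      _ = 0 := by rw [show (2 : ZMod 2) = 0 from rfl, zero_mul]
  exact one_ne_zero this

theorem IsNoncontextualBox.exists_forall_pos {p : ZMod 2 → ZMod 2 → ZMod 2 → ZMod 2 → ℝ}
    (hp : IsNoncontextualBox p) : ∃ α β : ZMod 2 → ZMod 2, ∀ i j, 0 < p i j (α i) (β j) := by
  obtain ⟨lam, hnonneg, hsum, hmarg⟩ := hp
  obtain ⟨α, β, hpos⟩ : ∃ α β, 0 < lam α β := by
    by_contra! hle
    have : ∑ α, ∑ β, lam α β ≤ 0 := sum_nonpos fun α _ => sum_nonpos fun β _ => hle α β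
    linarith
  refine ⟨α, β, fun i j => hpos.trans_le ?_⟩
  rw [hmarg]
  calc lam α β ≤ ∑ β' ∈ univ.filter (fun β' : ZMod 2 → ZMod 2 => β' j = β j), lam α β' :=
        single_le_sum (f := lam α) (fun _ _ => hnonneg _ _) (mem_filter.mpr ⟨mem_univ _, rfl⟩)
    _ ≤ ∑ α' ∈ univ.filter (fun α' : ZMod 2 → ZMod 2 => α' i = α i),
          ∑ β' ∈ univ.filter (fun β' : ZMod 2 → ZMod 2 => β' j = β j), lam α' β' :=
        single_le_sum (f := fun α' => ∑ β' ∈ _, lam α' β')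
          (fun _ _ => sum_nonneg fun _ _ => hnonneg _ _) (mem_filter.mpr ⟨mem_univ _, rfl⟩)

theorem PRBox_not_exists_forall_pos :
    ¬ ∃ α β : ZMod 2 → ZMod 2, ∀ i j, 0 < PRBox i j (α i) (β j) := fun ⟨α, β, h⟩ =>
  not_forall_add_eq_mul α β fun i j => (PRBox_pos_iff _ _ _ _).mp (h i j)

/-- **The Popescu–Rohrlich box is contextual, indeed strongly contextual:**
it is not a marginal family of any probability distribution on global assignments, and
moreover no global assignment gives positive probability in every context. -/
theorem PR_contextual_and_strongly_contextual :
    ¬ IsNoncontextualBox PRBox ∧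
    ¬ ∃ α β : ZMod 2 → ZMod 2, ∀ i j : ZMod 2, 0 < PRBox i j (α i) (β j) :=
  ⟨fun hp => PRBox_not_exists_forall_pos hp.exists_forall_pos, PRBox_not_exists_forall_pos⟩
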